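/- arXiv:1101.3441 — 4 statements merged into one kernel-verified Lean document; each statement's English description precedes it below -/
import Mathlib

section
/- Let the map Λ : ZC₃^{1+} → C₂^{1+} satisfy δΛ = Id on ZC₃^{1+} and Λδ = Id on C₂^{1+}. Then for any g ∈ C₂(V) with δg ∈ C₃^{1+}, setting δf := (Id − Λδ)g, one has (δf)_{st} = lim_{|Π_{st}|→0} Σ_{i=0}^{n−1} g_{t_i t_{i+1}}, the limit being over partitions Π_{st} = {s = t₀ < ⋯ < t_n = t} of [s,t] with mesh tending to zero. -/
/-!
Since `δL = δg`, the two-parameter function `g - L` is additive, so its sums over a partition of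
`[s, t]` telescope to `g s t - L s t`. The Riemann sum of `g` therefore differs from
`g s t - L s t` by the sum of `L` over the partition, which is at most
`C |Π|^(μ-1) (t - s)` because `‖L a b‖ ≤ C (b - a)^μ` with `μ > 1`.
-/

open Set Topology

theorem Fin.sum_succ_sub_castSucc {E : Type*} [AddCommGroup E] {n : ℕ} (f : Fin (n + 1) → E) :
    ∑ i : Fin n, (f i.succ - f i.castSucc) = f (Fin.last n) - f 0 := by
  induction n with
  | zero => simp
  | succ n ih =>
    have h := ih (fun j => f j.castSucc)
    simp only [← Fin.succ_castSucc] at h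
    rw [Fin.sum_univ_castSucc, h, Fin.succ_last, Fin.castSucc_zero]
    abel

theorem Fin.sum_eq_of_additiveOn {α E : Type*} [AddCommGroup E] {h : α → α → E} {A : Set α}
    (hadd : ∀ a ∈ A, ∀ b ∈ A, ∀ c ∈ A, h a c = h a b + h b c)
    {n : ℕ} (π : Fin (n + 1) → α) (hπ : ∀ i, π i ∈ A) :
    ∑ i : Fin n, h (π i.castSucc) (π i.succ) = h (π 0) (π (Fin.last n)) := by
  have hdiff : ∀ i : Fin n,
      h (π i.castSucc) (π i.succ) = h (π 0) (π i.succ) - h (π 0) (π i.castSucc) := fun i => by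
    rw [hadd _ (hπ 0) _ (hπ i.castSucc) _ (hπ i.succ)]
    abel
  have hzero : h (π 0) (π 0) = 0 := by
    simpa using hadd _ (hπ 0) _ (hπ 0) _ (hπ 0)
  simp only [hdiff, Fin.sum_succ_sub_castSucc (fun j => h (π 0) (π j)), hzero, sub_zero]

theorem Real.rpow_le_rpow_sub_one_mul {x η μ : ℝ} (hx : 0 ≤ x) (hxη : x ≤ η) (hμ : 1 ≤ μ) :
    x ^ μ ≤ η ^ (μ - 1) * x := by
  calc x ^ μ = x ^ (μ - 1) * x ^ (1 : ℝ) := by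
        rw [← Real.rpow_add' hx (by linarith), sub_add_cancel]
    _ ≤ η ^ (μ - 1) * x := by
        rw [Real.rpow_one]
        exact mul_le_mul_of_nonneg_right (Real.rpow_le_rpow hx hxη (by linarith)) hx

theorem norm_sum_le_of_norm_le_rpow {E : Type*} [SeminormedAddCommGroup E] {L : ℝ → ℝ → E}
    {μ C η : ℝ} (hμ : 1 ≤ μ) (hC : 0 ≤ C) {n : ℕ} {π : Fin (n + 1) → ℝ} (hπ : Monotone π)
    (hmesh : ∀ i : Fin n, π i.succ - π i.castSucc ≤ η)
    (hL : ∀ i : Fin n, ‖L (π i.castSucc) (π i.succ)‖ ≤ C * (π i.succ - π i.castSucc) ^ μ) :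
    ‖∑ i : Fin n, L (π i.castSucc) (π i.succ)‖ ≤ C * η ^ (μ - 1) * (π (Fin.last n) - π 0) := by
  calc ‖∑ i : Fin n, L (π i.castSucc) (π i.succ)‖
      ≤ ∑ i : Fin n, ‖L (π i.castSucc) (π i.succ)‖ := norm_sum_le _ _
    _ ≤ ∑ i : Fin n, C * η ^ (μ - 1) * (π i.succ - π i.castSucc) := by
        refine Finset.sum_le_sum fun i _ => (hL i).trans ?_
        rw [mul_assoc]
        have hgap : 0 ≤ π i.succ - π i.castSucc :=
          sub_nonneg.2 (hπ Fin.castSucc_lt_succ.le)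
        exact mul_le_mul_of_nonneg_left
          (Real.rpow_le_rpow_sub_one_mul hgap (hmesh i) hμ) hC
    _ = C * η ^ (μ - 1) * (π (Fin.last n) - π 0) := by
        rw [← Finset.mul_sum, Fin.sum_succ_sub_castSucc π]

theorem exists_pos_mul_rpow_lt (K : ℝ) {p ε : ℝ} (hp : 0 < p) (hε : 0 < ε) :
    ∃ η > 0, K * η ^ p < ε := by
  have hcont : ContinuousAt (fun η : ℝ => K * η ^ p) 0 :=
    continuousAt_const.mul (Real.continuousAt_rpow_const 0 p (Or.inr hp.le))
  have hsmall : ∀ᶠ η in 𝓝 (0 : ℝ), K * η ^ p < ε :=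
    hcont.eventually (gt_mem_nhds (by simpa [Real.zero_rpow hp.ne'] using hε))
  have hsmall' : ∀ᶠ η in 𝓝[>] (0 : ℝ), K * η ^ p < ε := nhdsWithin_le_nhds hsmall
  obtain ⟨η, hηε, hη⟩ := (hsmall'.and self_mem_nhdsWithin).exists
  exact ⟨η, hη, hηε⟩

theorem stmt5_general {E : Type*} [NormedAddCommGroup E]
    (T : ℝ) (g L : ℝ → ℝ → E)
    -- L = Λ(δg) belongs to C₂^{1+}
    (hL : ∃ μ > (1 : ℝ), ∃ C : ℝ, ∀ s t : ℝ,
      s ∈ Set.Icc 0 T → t ∈ Set.Icc 0 T → s ≤ t → ‖L s t‖ ≤ C * (t - s) ^ μ)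
    -- δ(Λδg) = δg
    (hδL : ∀ s u t : ℝ, s ∈ Set.Icc 0 T → u ∈ Set.Icc 0 T → t ∈ Set.Icc 0 T →
      L s t - L s u - L u t = g s t - g s u - g u t)
    (s t : ℝ) (hs : s ∈ Set.Icc (0 : ℝ) T) (ht : t ∈ Set.Icc (0 : ℝ) T) :
    ∀ ε > (0 : ℝ), ∃ η > (0 : ℝ), ∀ (n : ℕ) (π : Fin (n + 1) → ℝ),
      Monotone π → π 0 = s → π (Fin.last n) = t →
      (∀ i : Fin n, π i.succ - π i.castSucc < η) →
      ‖(∑ i : Fin n, g (π i.castSucc) (π i.succ)) - (g s t - L s t)‖ < ε := by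
  intro ε hε
  obtain ⟨μ, hμ, C, hLC⟩ := hL
  obtain ⟨η, hη, hηε⟩ := exists_pos_mul_rpow_lt (max C 0 * (t - s)) (sub_pos.2 hμ) hε
  refine ⟨η, hη, fun n π hπ h0 hlast hmesh => ?_⟩
  have hmem : ∀ i, π i ∈ Icc 0 T := fun i =>
    ⟨hs.1.trans (h0 ▸ hπ (Fin.zero_le i)), (hlast ▸ hπ (Fin.le_last i)).trans ht.2⟩
  have hadd : ∀ a ∈ Icc 0 T, ∀ b ∈ Icc 0 T, ∀ c ∈ Icc 0 T,
      g a c - L a c = (g a b - L a b) + (g b c - L b c) := fun a ha b hb c hc => by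
    linear_combination (norm := module) -hδL a b c ha hb hc
  have hsum : (∑ i : Fin n, g (π i.castSucc) (π i.succ)) - (g s t - L s t)
      = ∑ i : Fin n, L (π i.castSucc) (π i.succ) := by
    rw [← h0, ← hlast, ← Fin.sum_eq_of_additiveOn hadd π hmem, ← Finset.sum_sub_distrib]
    simp
  have hLmax : ∀ i : Fin n, ‖L (π i.castSucc) (π i.succ)‖
      ≤ max C 0 * (π i.succ - π i.castSucc) ^ μ := fun i =>
    (hLC _ _ (hmem _) (hmem _) (hπ Fin.castSucc_lt_succ.le)).trans <|
      mul_le_mul_of_nonneg_right (le_max_left _ _) (Real.rpow_nonneg (sub_nonneg.2 <|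
        hπ Fin.castSucc_lt_succ.le) _)
  calc ‖(∑ i : Fin n, g (π i.castSucc) (π i.succ)) - (g s t - L s t)‖
      ≤ max C 0 * η ^ (μ - 1) * (t - s) := by
        rw [hsum, ← h0, ← hlast]
        exact norm_sum_le_of_norm_le_rpow hμ.le (le_max_right _ _) hπ
          (fun i => (hmesh i).le) hLmax
    _ < ε := by linarith [mul_right_comm (max C 0) (t - s) (η ^ (μ - 1))]

/-- Riemann-sum representation of the sewing construction: if `g ∈ C₂(V)` with
`δg ∈ C₃^{1+}`, and `L = Λ(δg)` (so that `δL = δg` and `L ∈ C₂^{1+}`), then the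
increment `δf := g − Λδg` satisfies
`(δf)_{st} = lim_{|Π|→0} ∑_i g_{tᵢ t_{i+1}}` over partitions of `[s,t]`. -/
theorem stmt5 {E : Type*} [NormedAddCommGroup E] [NormedSpace ℝ E]
    (T : ℝ) (hT : 0 < T) (g L : ℝ → ℝ → E)
    -- δg ∈ C₃^{1+}
    (hδg : ∃ μ > (1 : ℝ), ∃ C : ℝ, ∀ s u t : ℝ,
      s ∈ Set.Icc 0 T → u ∈ Set.Icc 0 T → t ∈ Set.Icc 0 T → s ≤ u → u ≤ t →
      ‖g s t - g s u - g u t‖ ≤ C * (t - s) ^ μ)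
    -- L = Λ(δg) belongs to C₂^{1+}
    (hL : ∃ μ > (1 : ℝ), ∃ C : ℝ, ∀ s t : ℝ,
      s ∈ Set.Icc 0 T → t ∈ Set.Icc 0 T → s ≤ t → ‖L s t‖ ≤ C * (t - s) ^ μ)
    -- δ(Λδg) = δg
    (hδL : ∀ s u t : ℝ, s ∈ Set.Icc 0 T → u ∈ Set.Icc 0 T → t ∈ Set.Icc 0 T →
      L s t - L s u - L u t = g s t - g s u - g u t)
    (s t : ℝ) (hs : s ∈ Set.Icc (0 : ℝ) T) (ht : t ∈ Set.Icc (0 : ℝ) T)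
    (hst : s ≤ t) :
    ∀ ε > (0 : ℝ), ∃ η > (0 : ℝ), ∀ (n : ℕ) (π : Fin (n + 1) → ℝ),
      Monotone π → π 0 = s → π (Fin.last n) = t →
      (∀ i : Fin n, π i.succ - π i.castSucc < η) →
      ‖(∑ i : Fin n, g (π i.castSucc) (π i.succ)) - (g s t - L s t)‖ < ε :=
  stmt5_general T g L hL hδL s t hs ht
end

section
/- Let x be γ-Hölder with γ > 1/3 admitting a Lévy area x² ∈ C₂^{2γ} with δx² = x¹ ⊗ x¹, and let f ∈ C_b²(ℝ^d). Then z = f(x) is a weakly controlled path: (δz)_{st} = Σᵢ ∂ᵢf(x_s) x¹_{st}(i) + r_{st} with ζ_s(i) = ∂ᵢf(x_s) ∈ C₁^γ and remainder r ∈ C₂^{2γ}, and moreover N[z; Q_{γ,a}] ≤ c_{f,T}(1 + N[x; C₁^γ(ℝ^d)]²). -/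
/-!
Write `ζ = ∇f ∘ x` and `K = N[x; C₁^γ]`. Since `f ∈ C_b²`, both `f` and `∇f` are `M`-Lipschitz
and `‖∇f‖ ≤ M`, so `f ∘ x` and `ζ` are `γ`-Hölder with constant `M K` and `ζ` is bounded by `M`.
The first-order Taylor remainder `r_{st}` is at most `M ‖x_t - x_s‖² ≤ M K² |t - s|^{2γ}`.
Summing, `N[f(x); Q_{γ,a}] ≤ M (1 + 2K + K²) ≤ 2M (1 + K²)`.
-/

open Set

noncomputable section

/-- γ-Hölder seminorm of a path on `[0,T]`. -/
def hol1 {α : Type*} [NormedAddCommGroup α] (T μ : ℝ) (u : ℝ → α) : ℝ :=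
  sSup {c | ∃ s ∈ Icc (0 : ℝ) T, ∃ t ∈ Icc (0 : ℝ) T, s ≠ t ∧
    c = ‖u t - u s‖ / |t - s| ^ μ}

/-- μ-Hölder norm of a 1-increment on `[0,T]`. -/
def hol2 (T μ : ℝ) (r : ℝ → ℝ → ℝ) : ℝ :=
  sSup {c | ∃ s ∈ Icc (0 : ℝ) T, ∃ t ∈ Icc (0 : ℝ) T, s ≠ t ∧
    c = |r s t| / |t - s| ^ μ}

/-- sup norm of a path on `[0,T]`. -/
def sup1 {α : Type*} [NormedAddCommGroup α] (T : ℝ) (u : ℝ → α) : ℝ :=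
  sSup {c | ∃ s ∈ Icc (0 : ℝ) T, c = ‖u s‖}

open scoped NNReal InnerProductSpace Gradient

section HolderSeminorm

variable {α β : Type*} [NormedAddCommGroup α] [NormedAddCommGroup β] {T μ C : ℝ}

def IsHolderOnIcc (T μ : ℝ) (u : ℝ → α) : Prop :=
  ∃ C, ∀ s ∈ Icc (0 : ℝ) T, ∀ t ∈ Icc (0 : ℝ) T, ‖u t - u s‖ ≤ C * |t - s| ^ μ

lemma abs_sub_rpow_pos {s t : ℝ} (hst : s ≠ t) (μ : ℝ) : 0 < |t - s| ^ μ :=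
  Real.rpow_pos_of_pos (abs_pos.2 (sub_ne_zero.2 hst.symm)) μ

lemma hol1_nonneg (u : ℝ → α) : 0 ≤ hol1 T μ u :=
  Real.sSup_nonneg fun _ ⟨_, _, _, _, _, hc⟩ => hc ▸ by positivity

lemma hol1_le {u : ℝ → α} (hC : 0 ≤ C)
    (hu : ∀ s ∈ Icc (0 : ℝ) T, ∀ t ∈ Icc (0 : ℝ) T, ‖u t - u s‖ ≤ C * |t - s| ^ μ) :
    hol1 T μ u ≤ C := by
  refine Real.sSup_le ?_ hC
  rintro _ ⟨s, hs, t, ht, hst, rfl⟩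
  exact (div_le_iff₀ (abs_sub_rpow_pos hst μ)).2 (hu s hs t ht)

lemma hol2_le {r : ℝ → ℝ → ℝ} (hC : 0 ≤ C)
    (hr : ∀ s ∈ Icc (0 : ℝ) T, ∀ t ∈ Icc (0 : ℝ) T, |r s t| ≤ C * |t - s| ^ μ) :
    hol2 T μ r ≤ C := by
  refine Real.sSup_le ?_ hC
  rintro _ ⟨s, hs, t, ht, hst, rfl⟩
  exact (div_le_iff₀ (abs_sub_rpow_pos hst μ)).2 (hr s hs t ht)

lemma sup1_le {u : ℝ → α} (hC : 0 ≤ C) (hu : ∀ s ∈ Icc (0 : ℝ) T, ‖u s‖ ≤ C) :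
    sup1 T u ≤ C :=
  Real.sSup_le (fun _ ⟨s, hs, hc⟩ => hc ▸ hu s hs) hC

lemma norm_sub_le_hol1_mul {u : ℝ → α}
    (hu : IsHolderOnIcc T μ u) {s t : ℝ} (hs : s ∈ Icc 0 T) (ht : t ∈ Icc 0 T) :
    ‖u t - u s‖ ≤ hol1 T μ u * |t - s| ^ μ := by
  obtain ⟨C, hC⟩ := hu
  rcases eq_or_ne s t with rfl | hst
  · simpa using mul_nonneg (hol1_nonneg u) (Real.rpow_nonneg (abs_nonneg (s - s)) μ)
  have hbdd : BddAbove {c | ∃ s ∈ Icc (0 : ℝ) T, ∃ t ∈ Icc (0 : ℝ) T, s ≠ t ∧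
      c = ‖u t - u s‖ / |t - s| ^ μ} := by
    refine ⟨C, ?_⟩
    rintro _ ⟨s, hs, t, ht, hst, rfl⟩
    exact (div_le_iff₀ (abs_sub_rpow_pos hst μ)).2 (hC s hs t ht)
  exact (div_le_iff₀ (abs_sub_rpow_pos hst μ)).1 (le_csSup hbdd ⟨s, hs, t, ht, hst, rfl⟩)

lemma LipschitzWith.norm_comp_sub_le {g : α → β} {L : ℝ≥0} (hg : LipschitzWith L g) {u : ℝ → α}
    (hu : IsHolderOnIcc T μ u) {s t : ℝ} (hs : s ∈ Icc 0 T) (ht : t ∈ Icc 0 T) :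
    ‖g (u t) - g (u s)‖ ≤ L * hol1 T μ u * |t - s| ^ μ :=
  calc ‖g (u t) - g (u s)‖ ≤ L * ‖u t - u s‖ := hg.norm_sub_le _ _
    _ ≤ L * (hol1 T μ u * |t - s| ^ μ) := by gcongr; exact norm_sub_le_hol1_mul hu hs ht
    _ = L * hol1 T μ u * |t - s| ^ μ := by ring

lemma LipschitzWith.hol1_comp_le {g : α → β} {L : ℝ≥0} (hg : LipschitzWith L g) {u : ℝ → α}
    (hu : IsHolderOnIcc T μ u) :
    hol1 T μ (fun s => g (u s)) ≤ L * hol1 T μ u :=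
  hol1_le (mul_nonneg L.2 (hol1_nonneg u)) fun _ hs _ ht => hg.norm_comp_sub_le hu hs ht

end HolderSeminorm

section Taylor

variable {E F : Type*} [NormedAddCommGroup E] [NormedSpace ℝ E]
  [NormedAddCommGroup F] [NormedSpace ℝ F]

lemma lipschitzWith_of_norm_fderiv_le {f : E → F} {C : ℝ≥0} (hf : Differentiable ℝ f)
    (bound : ∀ x, ‖fderiv ℝ f x‖ ≤ C) : LipschitzWith C f :=
  lipschitzWith_of_nnnorm_fderiv_le hf fun x => by exact_mod_cast bound x

lemma norm_sub_sub_fderiv_le_of_lipschitzWith {f : E → F} {C : ℝ≥0} (hf : Differentiable ℝ f)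
    (hf' : LipschitzWith C (fderiv ℝ f)) (a b : E) :
    ‖f b - f a - fderiv ℝ f a (b - a)‖ ≤ C * ‖b - a‖ ^ 2 := by
  have bound : ∀ y ∈ Metric.closedBall a ‖b - a‖, ‖fderiv ℝ f y - fderiv ℝ f a‖ ≤ C * ‖b - a‖ :=
    fun y hy => (hf'.norm_sub_le y a).trans <| by
      gcongr; rwa [← dist_eq_norm, ← Metric.mem_closedBall]
  calc ‖f b - f a - fderiv ℝ f a (b - a)‖ ≤ C * ‖b - a‖ * ‖b - a‖ :=
        (convex_closedBall a _).norm_image_sub_le_of_norm_fderiv_le' (fun y _ => hf y) bound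
          (Metric.mem_closedBall_self (norm_nonneg _)) (by simp [dist_eq_norm])
    _ = C * ‖b - a‖ ^ 2 := by ring

lemma ContDiff.lipschitzWith_fderiv {f : E → F} (hf : ContDiff ℝ 2 f) {C : ℝ≥0}
    (bound : ∀ x, ‖iteratedFDeriv ℝ 2 f x‖ ≤ C) : LipschitzWith C (fderiv ℝ f) :=
  lipschitzWith_of_norm_fderiv_le ((hf.fderiv_right (m := 1) le_rfl).differentiable one_ne_zero)
    fun x => by simpa [← norm_iteratedFDeriv_fderiv] using bound x

lemma sq_le_sq_mul_rpow_two_mul {a K τ μ : ℝ} (ha : 0 ≤ a) (hτ : 0 ≤ τ) (h : a ≤ K * τ ^ μ) :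
    a ^ 2 ≤ K ^ 2 * τ ^ (2 * μ) :=
  calc a ^ 2 ≤ (K * τ ^ μ) ^ 2 := pow_le_pow_left₀ ha h 2
    _ = K ^ 2 * τ ^ (2 * μ) := by
      rw [mul_pow, mul_comm 2 μ, ← Real.rpow_mul_natCast hτ μ 2, Nat.cast_ofNat]

lemma norm_sub_sub_fderiv_comp_le {f : E → F} {C : ℝ≥0} (hf : Differentiable ℝ f)
    (hf' : LipschitzWith C (fderiv ℝ f)) {T μ : ℝ} {u : ℝ → E}
    (hu : IsHolderOnIcc T μ u) {s t : ℝ} (hs : s ∈ Icc 0 T) (ht : t ∈ Icc 0 T) :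
    ‖f (u t) - f (u s) - fderiv ℝ f (u s) (u t - u s)‖
      ≤ C * hol1 T μ u ^ 2 * |t - s| ^ (2 * μ) :=
  calc _ ≤ C * ‖u t - u s‖ ^ 2 := norm_sub_sub_fderiv_le_of_lipschitzWith hf hf' _ _
    _ ≤ C * (hol1 T μ u ^ 2 * |t - s| ^ (2 * μ)) := by
      gcongr
      exact sq_le_sq_mul_rpow_two_mul (norm_nonneg _) (abs_nonneg _)
        (norm_sub_le_hol1_mul hu hs ht)
    _ = C * hol1 T μ u ^ 2 * |t - s| ^ (2 * μ) := by ring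

end Taylor

section Gradient

variable {E : Type*} [NormedAddCommGroup E] [InnerProductSpace ℝ E] [CompleteSpace E]

lemma norm_gradient (f : E → ℝ) (x : E) : ‖∇ f x‖ = ‖fderiv ℝ f x‖ :=
  (InnerProductSpace.toDual ℝ E).symm.norm_map _

lemma LipschitzWith.gradient {f : E → ℝ} {C : ℝ≥0} (hf : LipschitzWith C (fderiv ℝ f)) :
    LipschitzWith C (∇ f) := by
  have h := (InnerProductSpace.toDual ℝ E).symm.isometry.lipschitz.comp hf
  rw [one_mul] at h
  exact h

variable {ι : Type*} [Fintype ι] [DecidableEq ι]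

lemma EuclideanSpace.gradient_apply (f : EuclideanSpace ℝ ι → ℝ) (x : EuclideanSpace ℝ ι)
    (i : ι) : ∇ f x i = fderiv ℝ f x (EuclideanSpace.single i 1) := by
  rw [← InnerProductSpace.toDual_symm_apply, EuclideanSpace.inner_single_right]
  simp [gradient]

lemma EuclideanSpace.fderiv_apply_eq_sum (f : EuclideanSpace ℝ ι → ℝ) (x v : EuclideanSpace ℝ ι) :
    fderiv ℝ f x v = ∑ i, fderiv ℝ f x (EuclideanSpace.single i 1) * v i := by
  calc fderiv ℝ f x v = ⟪∇ f x, v⟫_ℝ := InnerProductSpace.toDual_symm_apply.symm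
    _ = ∑ i, ∇ f x i * v i := by
      simp only [PiLp.inner_apply, RCLike.inner_apply, conj_trivial, mul_comm]
    _ = _ := by simp_rw [EuclideanSpace.gradient_apply]

end Gradient

theorem stmt7_general (d : ℕ) (T γ : ℝ)
    (f : EuclideanSpace ℝ (Fin d) → ℝ) (hf : ContDiff ℝ 2 f)
    (hfb : ∃ M : ℝ, ∀ k ≤ 2, ∀ y, ‖iteratedFDeriv ℝ k f y‖ ≤ M) :
    ∃ c : ℝ, ∀ (x : ℝ → EuclideanSpace ℝ (Fin d))
      (x2 : ℝ → ℝ → Fin d → Fin d → ℝ),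
      -- x is γ-Hölder
      (∃ Cx : ℝ, ∀ s ∈ Icc (0 : ℝ) T, ∀ t ∈ Icc (0 : ℝ) T,
        ‖x t - x s‖ ≤ Cx * |t - s| ^ γ) →
      -- the Lévy area x² is 2γ-Hölder
      (∃ C2 : ℝ, ∀ s ∈ Icc (0 : ℝ) T, ∀ t ∈ Icc (0 : ℝ) T, ∀ i j,
        |x2 s t i j| ≤ C2 * |t - s| ^ (2 * γ)) →
      -- δx² = x¹ ⊗ x¹
      (∀ s ∈ Icc (0 : ℝ) T, ∀ u ∈ Icc (0 : ℝ) T, ∀ t ∈ Icc (0 : ℝ) T, ∀ i j,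
        x2 s t i j - x2 s u i j - x2 u t i j = (x u i - x s i) * (x t j - x u j)) →
      -- conclusions, with ζ_s(i) = ∂ᵢ f(x_s) and r the remainder of the decomposition
      (let ζ : ℝ → EuclideanSpace ℝ (Fin d) :=
        fun s => WithLp.toLp 2 (fun i => fderiv ℝ f (x s) (EuclideanSpace.single i 1));
       let r : ℝ → ℝ → ℝ := fun s t => f (x t) - f (x s) -
         ∑ i, fderiv ℝ f (x s) (EuclideanSpace.single i 1) * (x t i - x s i);
       -- decomposition δ(f ∘ x) = ζ·x¹ + r
       (∀ s t : ℝ, f (x t) - f (x s)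
          = (∑ i, ζ s i * (x t i - x s i)) + r s t) ∧
       -- ζ ∈ C₁^γ
       (∃ Cζ : ℝ, ∀ s ∈ Icc (0 : ℝ) T, ∀ t ∈ Icc (0 : ℝ) T,
          ‖ζ t - ζ s‖ ≤ Cζ * |t - s| ^ γ) ∧
       -- r ∈ C₂^{2γ}
       (∃ Cr : ℝ, ∀ s ∈ Icc (0 : ℝ) T, ∀ t ∈ Icc (0 : ℝ) T,
          |r s t| ≤ Cr * |t - s| ^ (2 * γ)) ∧
       -- seminorm estimate N[z; Q_{γ,a}] ≤ c_{f,T} (1 + N[x; C₁^γ]²)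
       hol1 T γ (fun s => f (x s)) + sup1 T ζ + hol1 T γ ζ + hol2 T (2 * γ) r
         ≤ c * (1 + (hol1 T γ x) ^ 2)) := by
  obtain ⟨M, hM⟩ := hfb
  lift M to ℝ≥0 using (norm_nonneg _).trans (hM 0 zero_le_two 0)
  have hf₁ : Differentiable ℝ f := hf.differentiable two_ne_zero
  have hDf : ∀ y, ‖fderiv ℝ f y‖ ≤ M := fun y => by simpa using hM 1 one_le_two y
  have hlip : LipschitzWith M f := lipschitzWith_of_norm_fderiv_le hf₁ hDf
  have hlip' : LipschitzWith M (fderiv ℝ f) := hf.lipschitzWith_fderiv (hM 2 le_rfl)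
  refine ⟨2 * M, fun x _ hx _ _ => ?_⟩
  intro ζ r
  have hζ : ζ = fun s => ∇ f (x s) := by
    funext s; ext i; exact (EuclideanSpace.gradient_apply f (x s) i).symm
  have hr : r = fun s t => f (x t) - f (x s) - fderiv ℝ f (x s) (x t - x s) := by
    funext s t; rw [EuclideanSpace.fderiv_apply_eq_sum]; rfl
  set K := hol1 T γ x
  have hK : 0 ≤ K := hol1_nonneg x
  have hζK : ∀ s ∈ Icc (0 : ℝ) T, ∀ t ∈ Icc (0 : ℝ) T, ‖ζ t - ζ s‖ ≤ M * K * |t - s| ^ γ :=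
    fun s hs t ht => by rw [hζ]; exact hlip'.gradient.norm_comp_sub_le hx hs ht
  have hrK : ∀ s ∈ Icc (0 : ℝ) T, ∀ t ∈ Icc (0 : ℝ) T,
      |r s t| ≤ M * K ^ 2 * |t - s| ^ (2 * γ) := fun s hs t ht => by
    rw [hr, ← Real.norm_eq_abs]; exact norm_sub_sub_fderiv_comp_le hf₁ hlip' hx hs ht
  refine ⟨fun s t => by simp [ζ, r], ⟨_, hζK⟩, ⟨_, hrK⟩, ?_⟩
  have h₁ : hol1 T γ (fun s => f (x s)) ≤ M * K := hlip.hol1_comp_le hx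
  have h₂ : sup1 T ζ ≤ M := sup1_le M.2 fun s _ => by
    simpa [hζ, norm_gradient] using hDf (x s)
  have h₃ : hol1 T γ ζ ≤ M * K := hol1_le (mul_nonneg M.2 hK) hζK
  have h₄ : hol2 T (2 * γ) r ≤ M * K ^ 2 := hol2_le (mul_nonneg M.2 (sq_nonneg K)) hrK
  nlinarith [mul_nonneg M.2 (sq_nonneg (K - 1))]

/-- If `x` is γ-Hölder (1/3 < γ ≤ 1/2) admitting a Lévy area and `f ∈ C_b²(ℝ^d)`,
then `z = f(x)` is weakly controlled: `(δz)_{st} = ∑ᵢ ∂ᵢf(x_s) x¹_{st}(i) + r_{st}`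
with `ζ = ∇f(x) ∈ C₁^γ`, `r ∈ C₂^{2γ}`, and
`N[z; Q_{γ,a}] ≤ c_{f,T} (1 + N[x; C₁^γ]²)`. -/
theorem stmt7 (d : ℕ) (T γ : ℝ) (hT : 0 < T) (hγ1 : 1 / 3 < γ) (hγ2 : γ ≤ 1 / 2)
    (f : EuclideanSpace ℝ (Fin d) → ℝ) (hf : ContDiff ℝ 2 f)
    (hfb : ∃ M : ℝ, ∀ k ≤ 2, ∀ y, ‖iteratedFDeriv ℝ k f y‖ ≤ M) :
    ∃ c : ℝ, ∀ (x : ℝ → EuclideanSpace ℝ (Fin d))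
      (x2 : ℝ → ℝ → Fin d → Fin d → ℝ),
      -- x is γ-Hölder
      (∃ Cx : ℝ, ∀ s ∈ Icc (0 : ℝ) T, ∀ t ∈ Icc (0 : ℝ) T,
        ‖x t - x s‖ ≤ Cx * |t - s| ^ γ) →
      -- the Lévy area x² is 2γ-Hölder
      (∃ C2 : ℝ, ∀ s ∈ Icc (0 : ℝ) T, ∀ t ∈ Icc (0 : ℝ) T, ∀ i j,
        |x2 s t i j| ≤ C2 * |t - s| ^ (2 * γ)) →
      -- δx² = x¹ ⊗ x¹
      (∀ s ∈ Icc (0 : ℝ) T, ∀ u ∈ Icc (0 : ℝ) T, ∀ t ∈ Icc (0 : ℝ) T, ∀ i j,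
        x2 s t i j - x2 s u i j - x2 u t i j = (x u i - x s i) * (x t j - x u j)) →
      -- conclusions, with ζ_s(i) = ∂ᵢ f(x_s) and r the remainder of the decomposition
      (let ζ : ℝ → EuclideanSpace ℝ (Fin d) :=
        fun s => WithLp.toLp 2 (fun i => fderiv ℝ f (x s) (EuclideanSpace.single i 1));
       let r : ℝ → ℝ → ℝ := fun s t => f (x t) - f (x s) -
         ∑ i, fderiv ℝ f (x s) (EuclideanSpace.single i 1) * (x t i - x s i);
       -- decomposition δ(f ∘ x) = ζ·x¹ + r
       (∀ s t : ℝ, f (x t) - f (x s)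
          = (∑ i, ζ s i * (x t i - x s i)) + r s t) ∧
       -- ζ ∈ C₁^γ
       (∃ Cζ : ℝ, ∀ s ∈ Icc (0 : ℝ) T, ∀ t ∈ Icc (0 : ℝ) T,
          ‖ζ t - ζ s‖ ≤ Cζ * |t - s| ^ γ) ∧
       -- r ∈ C₂^{2γ}
       (∃ Cr : ℝ, ∀ s ∈ Icc (0 : ℝ) T, ∀ t ∈ Icc (0 : ℝ) T,
          |r s t| ≤ Cr * |t - s| ^ (2 * γ)) ∧
       -- seminorm estimate N[z; Q_{γ,a}] ≤ c_{f,T} (1 + N[x; C₁^γ]²)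
       hol1 T γ (fun s => f (x s)) + sup1 T ζ + hol1 T γ ζ + hol2 T (2 * γ) r
         ≤ c * (1 + (hol1 T γ x) ^ 2)) :=
  stmt7_general d T γ f hf hfb
end
end

section
/- Let x satisfy the order-2 rough path hypotheses (γ-Hölder with γ > 1/3, Lévy area x² with δx² = x¹ ⊗ x¹ and the geometric relation x¹_{st}(i)x¹_{st}(j) = x²_{st}(i,j) + x²_{st}(j,i)), and let f ∈ C³(ℝ^d; ℝ). Then f(x_t) − f(x_s) equals the limit, over partitions of [s,t] with mesh tending to zero, of Σ_{q=0}^{n−1} [ Σᵢ ∂ᵢf(x_{t_q}) x¹_{t_q t_{q+1}}(i) + Σ_{i₁,i₂} ∂²_{i₁i₂}f(x_{t_q}) x²_{t_q t_{q+1}}(i₁,i₂) ]. -/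
/-!
The Hessian of `f` is symmetric, so the geometric relation turns the second-order term of each
summand into exactly `½ D²f(x_a)(x¹_{ab}, x¹_{ab})`. Each summand therefore differs from
`f(x_b) - f(x_a)` by a second-order Taylor remainder, of size `O(‖x¹_{ab}‖³) = O(|b - a|^{3γ})`,
and since `3γ > 1` these errors add up to `O(mesh^{3γ-1}) → 0`.
-/

open Set Metric NNReal

section Taylor

variable {E F : Type*} [NormedAddCommGroup E] [NormedSpace ℝ E]
  [NormedAddCommGroup F] [NormedSpace ℝ F]

theorem norm_sub_le_of_norm_hasFDerivAt_le_mul_pow {g : E → F} {g' : E → E →L[ℝ] F}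
    {a b : E} {C : ℝ} (k : ℕ) (hC : 0 ≤ C)
    (hg : ∀ z ∈ segment ℝ a b, HasFDerivAt g (g' z) z)
    (hbound : ∀ z ∈ segment ℝ a b, ‖g' z‖ ≤ C * ‖z - a‖ ^ k) :
    ‖g b - g a‖ ≤ C * ‖b - a‖ ^ (k + 1) := by
  have hbound' : ∀ z ∈ segment ℝ a b, ‖g' z‖ ≤ C * ‖b - a‖ ^ k := fun z hz =>
    (hbound z hz).trans (by gcongr; exact norm_sub_le_of_mem_segment hz)
  calc ‖g b - g a‖ ≤ C * ‖b - a‖ ^ k * ‖b - a‖ :=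
        (convex_segment a b).norm_image_sub_le_of_norm_hasFDerivWithin_le
          (fun z hz => (hg z hz).hasFDerivWithinAt) hbound'
          (left_mem_segment ℝ a b) (right_mem_segment ℝ a b)
    _ = C * ‖b - a‖ ^ (k + 1) := by ring

theorem Convex.norm_taylor_two_remainder_le {f : E → F} {s : Set E} (hs : Convex ℝ s)
    (hf : ContDiff ℝ 2 f) {K : ℝ≥0} (hK : LipschitzOnWith K (fderiv ℝ (fderiv ℝ f)) s)
    {a b : E} (ha : a ∈ s) (hb : b ∈ s) :
    ‖f b - f a - fderiv ℝ f a (b - a) - (2 : ℝ)⁻¹ • fderiv ℝ (fderiv ℝ f) a (b - a) (b - a)‖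
      ≤ K * ‖b - a‖ ^ 3 := by
  set f' := fderiv ℝ f
  set f'' := fderiv ℝ f'
  have hf' : Differentiable ℝ f' := (hf.fderiv_right (m := 1) le_rfl).differentiable one_ne_zero
  have hseg : segment ℝ a b ⊆ s := hs.segment_subset ha hb
  have hf'_sub : ∀ z ∈ segment ℝ a b, ‖f' z - f' a - f'' a (z - a)‖ ≤ K * ‖z - a‖ ^ 2 := by
    intro z hz
    have hderiv : ∀ w, HasFDerivAt (fun w => f' w - f'' a (w - a)) (f'' w - f'' a) w :=
      fun w => (hf' w).hasFDerivAt.sub ((hasFDerivAt_comp_sub a).2 (f'' a).hasFDerivAt)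
    have h := norm_sub_le_of_norm_hasFDerivAt_le_mul_pow 1 K.2 (fun w _ => hderiv w)
      fun w hw => by
        rw [pow_one]
        exact hK.norm_sub_le (hs.segment_subset ha (hseg hz) hw) ha
    rwa [sub_self, map_zero, sub_zero, sub_right_comm] at h
  -- symmetry of `D²f(a)` makes `D²f(a)(w - a)` the derivative of `½ D²f(a)(w - a)(w - a)`
  have hsymm : IsSymmSndFDerivAt ℝ f a :=
    hf.contDiffAt.isSymmSndFDerivAt (by simp)
  have hderiv : ∀ w, HasFDerivAt
      (fun w => f w - f' a (w - a) - (2 : ℝ)⁻¹ • f'' a (w - a) (w - a))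
      (f' w - f' a - f'' a (w - a)) w := by
    intro w
    have := (((hf.differentiable two_ne_zero) w).hasFDerivAt.sub
      ((hasFDerivAt_comp_sub a).2 (f' a).hasFDerivAt)).sub
      (((f'' a).hasFDerivAt_of_bilinear ((hasFDerivAt_id w).sub_const a)
        ((hasFDerivAt_id w).sub_const a)).const_smul (2 : ℝ)⁻¹)
    refine this.congr_fderiv ?_
    ext v
    simp only [sub_apply, smul_apply, add_apply, ContinuousLinearMap.precompR_apply,
      ContinuousLinearMap.precompL_apply, ContinuousLinearMap.id_apply, id]
    rw [hsymm.eq v (w - a)]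
    simp only [ContinuousLinearMap.compL_apply, ContinuousLinearMap.comp_id, f', f'']
    module
  have h := norm_sub_le_of_norm_hasFDerivAt_le_mul_pow 2 K.2 (fun w _ => hderiv w) hf'_sub
  simp only [sub_self, map_zero, smul_zero, sub_zero] at h
  rwa [sub_right_comm _ (f a), sub_right_comm _ (f a)]

end Taylor

section Coordinates

variable {ι : Type*} [Fintype ι] [DecidableEq ι]

theorem ContinuousLinearMap.apply_eq_sum_single {F : Type*} [AddCommGroup F] [Module ℝ F]
    [TopologicalSpace F] (L : EuclideanSpace ℝ ι →L[ℝ] F) (v : EuclideanSpace ℝ ι) :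
    L v = ∑ i, v i • L (EuclideanSpace.single i 1) := by
  conv_lhs => rw [← (EuclideanSpace.basisFun ι ℝ).sum_repr v]
  simp [map_sum]

theorem ContinuousLinearMap.sum_sum_apply_single_mul_eq_half_apply
    (B : EuclideanSpace ℝ ι →L[ℝ] EuclideanSpace ℝ ι →L[ℝ] ℝ) (hB : ∀ u w, B u w = B w u)
    {v : EuclideanSpace ℝ ι} {X : ι → ι → ℝ} (hX : ∀ i j, v i * v j = X i j + X j i) :
    ∑ i, ∑ j, B (EuclideanSpace.single j 1) (EuclideanSpace.single i 1) * X i j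
      = B v v / 2 := by
  set e : ι → EuclideanSpace ℝ ι := fun i => EuclideanSpace.single i 1
  have hexpand : B v v = ∑ i, ∑ j, B (e j) (e i) * (X i j + X j i) := by
    rw [B.apply_eq_sum_single v, sum_apply]
    refine Finset.sum_congr rfl fun i _ => ?_
    rw [smul_apply, (B (e i)).apply_eq_sum_single v, smul_eq_mul, Finset.mul_sum]
    refine Finset.sum_congr rfl fun j _ => ?_
    rw [smul_eq_mul, ← hX, hB]
    simp only [e]
    ring
  have hswap : ∑ i, ∑ j, B (e j) (e i) * X j i = ∑ i, ∑ j, B (e j) (e i) * X i j := by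
    rw [Finset.sum_comm]
    exact Finset.sum_congr rfl fun i _ => Finset.sum_congr rfl fun j _ => by rw [hB]
  rw [hexpand]
  simp only [mul_add, Finset.sum_add_distrib, hswap]
  ring

theorem sum_fderiv_single_add_sum_sum_fderiv_single_eq {f : EuclideanSpace ℝ ι → ℝ}
    (hf : ContDiff ℝ 2 f) (p v : EuclideanSpace ℝ ι) {X : ι → ι → ℝ}
    (hX : ∀ i j, v i * v j = X i j + X j i) :
    (∑ i, fderiv ℝ f p (EuclideanSpace.single i 1) * v i) +
        ∑ i, ∑ j, fderiv ℝ (fun z => fderiv ℝ f z (EuclideanSpace.single i 1)) p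
          (EuclideanSpace.single j 1) * X i j
      = fderiv ℝ f p v + fderiv ℝ (fderiv ℝ f) p v v / 2 := by
  have hf' : Differentiable ℝ (fderiv ℝ f) :=
    (hf.fderiv_right (m := 1) le_rfl).differentiable one_ne_zero
  have hsymm : IsSymmSndFDerivAt ℝ f p := hf.contDiffAt.isSymmSndFDerivAt (by simp)
  have hpartial : ∀ i j, fderiv ℝ (fun z => fderiv ℝ f z (EuclideanSpace.single i 1)) p
      (EuclideanSpace.single j 1) = fderiv ℝ (fderiv ℝ f) p (EuclideanSpace.single j 1)
        (EuclideanSpace.single i 1) := fun i j => by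
    simp [fderiv_clm_apply (hf' p) (differentiableAt_const _)]
  simp only [hpartial, (fderiv ℝ (fderiv ℝ f) p).sum_sum_apply_single_mul_eq_half_apply hsymm hX]
  rw [(fderiv ℝ f p).apply_eq_sum_single v]
  simp [mul_comm]

end Coordinates

section Partitions

theorem Fin.sum_succ_sub_castSucc_s8 {M : Type*} [AddCommGroup M] {n : ℕ} (g : Fin (n + 1) → M) :
    ∑ q : Fin n, (g q.succ - g q.castSucc) = g (Fin.last n) - g 0 := by
  induction n with
  | zero => simp
  | succ n ih =>
    rw [Fin.sum_univ_castSucc]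
    simp only [Fin.succ_castSucc]
    rw [ih (fun i => g i.castSucc), Fin.succ_last, Fin.castSucc_zero]
    abel

theorem sum_rpow_sub_le_of_mesh_le {n : ℕ} {π : Fin (n + 1) → ℝ} (hπ : Monotone π)
    {θ η : ℝ} (hθ : 1 ≤ θ) (hη : ∀ q : Fin n, π q.succ - π q.castSucc ≤ η) :
    ∑ q : Fin n, (π q.succ - π q.castSucc) ^ θ ≤ η ^ (θ - 1) * (π (Fin.last n) - π 0) := by
  rw [← Fin.sum_succ_sub_castSucc_s8, Finset.mul_sum]
  refine Finset.sum_le_sum fun q _ => ?_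
  have hΔ : 0 ≤ π q.succ - π q.castSucc := sub_nonneg.2 (hπ (Fin.castSucc_le_succ q))
  calc (π q.succ - π q.castSucc) ^ θ
      = (π q.succ - π q.castSucc) ^ (θ - 1) * (π q.succ - π q.castSucc) := by
        rw [← Real.rpow_add_one' hΔ (by linarith), sub_add_cancel]
    _ ≤ η ^ (θ - 1) * (π q.succ - π q.castSucc) := by
        gcongr
        exact hη q

theorem exists_mesh_abs_sum_sub_lt {g : ℝ → ℝ} {S : ℝ → ℝ → ℝ} {s t K θ : ℝ} (hK : 0 ≤ K)
    (hθ : 1 < θ)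
    (hS : ∀ a ∈ Icc s t, ∀ b ∈ Icc s t, a ≤ b → |S a b - (g b - g a)| ≤ K * (b - a) ^ θ) :
    ∀ ε > (0 : ℝ), ∃ η > (0 : ℝ), ∀ (n : ℕ) (π : Fin (n + 1) → ℝ),
      Monotone π → π 0 = s → π (Fin.last n) = t →
      (∀ q : Fin n, π q.succ - π q.castSucc < η) →
      |∑ q : Fin n, S (π q.castSucc) (π q.succ) - (g t - g s)| < ε := by
  intro ε hε
  have hden : 0 < K * |t - s| + 1 := by positivity
  have hc : 0 < ε / (K * |t - s| + 1) := div_pos hε hden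
  refine ⟨(ε / (K * |t - s| + 1)) ^ (θ - 1)⁻¹, by positivity,
    fun n π hπ h0 hlast hmesh => ?_⟩
  have hmem : ∀ q, π q ∈ Icc s t :=
    fun q => ⟨h0 ▸ hπ (Fin.zero_le q), hlast ▸ hπ (Fin.le_last q)⟩
  have hst : 0 ≤ t - s := sub_nonneg.2 (h0 ▸ hlast ▸ hπ (Fin.zero_le _))
  have hvar := sum_rpow_sub_le_of_mesh_le hπ hθ.le fun q => (hmesh q).le
  rw [Real.rpow_inv_rpow hc.le (by linarith), h0, hlast] at hvar
  have htel : ∑ q : Fin n, (g (π q.succ) - g (π q.castSucc)) = g t - g s := by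
    simpa [h0, hlast] using Fin.sum_succ_sub_castSucc_s8 fun q => g (π q)
  calc |∑ q : Fin n, S (π q.castSucc) (π q.succ) - (g t - g s)|
      = |∑ q : Fin n, (S (π q.castSucc) (π q.succ) - (g (π q.succ) - g (π q.castSucc)))| := by
        rw [Finset.sum_sub_distrib, htel]
    _ ≤ ∑ q : Fin n, |S (π q.castSucc) (π q.succ) - (g (π q.succ) - g (π q.castSucc))| :=
        Finset.abs_sum_le_sum_abs _ _
    _ ≤ ∑ q : Fin n, K * (π q.succ - π q.castSucc) ^ θ :=
        Finset.sum_le_sum fun q _ => hS _ (hmem _) _ (hmem _) (hπ (Fin.castSucc_le_succ q))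
    _ ≤ K * (ε / (K * |t - s| + 1) * (t - s)) := by
        rw [← Finset.mul_sum]
        gcongr
    _ = ε * (K * |t - s| / (K * |t - s| + 1)) := by
        rw [abs_of_nonneg hst]
        ring
    _ < ε := mul_lt_of_lt_one_right hε ((div_lt_one hden).2 (lt_add_one _))

end Partitions

noncomputable def secondOrderRiemannSummand {ι : Type*} [Fintype ι] [DecidableEq ι]
    (f : EuclideanSpace ℝ ι → ℝ) (x : ℝ → EuclideanSpace ℝ ι) (x2 : ℝ → ℝ → ι → ι → ℝ)
    (a b : ℝ) : ℝ :=
  (∑ i, fderiv ℝ f (x a) (EuclideanSpace.single i 1) * (x b i - x a i)) +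
    ∑ i, ∑ j, fderiv ℝ (fun z => fderiv ℝ f z (EuclideanSpace.single i 1)) (x a)
      (EuclideanSpace.single j 1) * x2 a b i j

theorem abs_secondOrderRiemannSummand_sub_le {ι : Type*} [Fintype ι] [DecidableEq ι]
    {f : EuclideanSpace ℝ ι → ℝ} (hf : ContDiff ℝ 2 f) {s : Set (EuclideanSpace ℝ ι)}
    (hs : Convex ℝ s) {K : ℝ≥0} (hK : LipschitzOnWith K (fderiv ℝ (fderiv ℝ f)) s)
    {x : ℝ → EuclideanSpace ℝ ι} {x2 : ℝ → ℝ → ι → ι → ℝ} {a b C γ : ℝ} (hab : a ≤ b)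
    (ha : x a ∈ s) (hb : x b ∈ s) (hx : ‖x b - x a‖ ≤ C * (b - a) ^ γ)
    (hgeo : ∀ i j, (x b i - x a i) * (x b j - x a j) = x2 a b i j + x2 a b j i) :
    |secondOrderRiemannSummand f x x2 a b - (f (x b) - f (x a))|
      ≤ K * C ^ 3 * (b - a) ^ (3 * γ) := by
  have hsummand := sum_fderiv_single_add_sum_sum_fderiv_single_eq hf (x a) (x b - x a) hgeo
  simp only [PiLp.sub_apply] at hsummand
  calc |secondOrderRiemannSummand f x x2 a b - (f (x b) - f (x a))|
      = ‖f (x b) - f (x a) - fderiv ℝ f (x a) (x b - x a)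
          - (2 : ℝ)⁻¹ • fderiv ℝ (fderiv ℝ f) (x a) (x b - x a) (x b - x a)‖ := by
        rw [secondOrderRiemannSummand, hsummand, Real.norm_eq_abs, abs_sub_comm, smul_eq_mul]
        ring_nf
    _ ≤ K * ‖x b - x a‖ ^ 3 := hs.norm_taylor_two_remainder_le hf hK ha hb
    _ ≤ K * (C * (b - a) ^ γ) ^ 3 := by gcongr
    _ = K * C ^ 3 * (b - a) ^ (3 * γ) := by
        rw [mul_pow, ← Real.rpow_natCast ((b - a) ^ γ), ← Real.rpow_mul (sub_nonneg.2 hab)]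
        ring_nf

theorem stmt8_general (d : ℕ) (T γ : ℝ) (hγ1 : 1 / 3 < γ)
    (x : ℝ → EuclideanSpace ℝ (Fin d)) (x2 : ℝ → ℝ → Fin d → Fin d → ℝ)
    (hx : ∃ Cx : ℝ, ∀ s ∈ Icc (0 : ℝ) T, ∀ t ∈ Icc (0 : ℝ) T,
      ‖x t - x s‖ ≤ Cx * |t - s| ^ γ)
    (hgeo : ∀ s ∈ Icc (0 : ℝ) T, ∀ t ∈ Icc (0 : ℝ) T, ∀ i j,
      (x t i - x s i) * (x t j - x s j) = x2 s t i j + x2 s t j i)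
    (f : EuclideanSpace ℝ (Fin d) → ℝ) (hf : ContDiff ℝ 3 f)
    (s t : ℝ) (hs : s ∈ Icc (0 : ℝ) T) (ht : t ∈ Icc (0 : ℝ) T) :
    ∀ ε > (0 : ℝ), ∃ η > (0 : ℝ), ∀ (n : ℕ) (π : Fin (n + 1) → ℝ),
      Monotone π → π 0 = s → π (Fin.last n) = t →
      (∀ q : Fin n, π q.succ - π q.castSucc < η) →
      |(∑ q : Fin n,
          ((∑ i, fderiv ℝ f (x (π q.castSucc)) (EuclideanSpace.single i 1) *
              (x (π q.succ) i - x (π q.castSucc) i)) +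
           ∑ i, ∑ j,
            fderiv ℝ (fun z => fderiv ℝ f z (EuclideanSpace.single i 1))
                (x (π q.castSucc)) (EuclideanSpace.single j 1) *
              x2 (π q.castSucc) (π q.succ) i j))
        - (f (x t) - f (x s))| < ε := by
  obtain ⟨C, hC⟩ := hx
  have hIcc : Icc s t ⊆ Icc 0 T := Icc_subset_Icc hs.1 ht.2
  have hholder : ∀ a ∈ Icc s t, ∀ b ∈ Icc s t, a ≤ b → ‖x b - x a‖ ≤ |C| * (b - a) ^ γ :=
    fun a ha b hb hab => (hC a (hIcc ha) b (hIcc hb)).trans <| by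
      rw [abs_of_nonneg (sub_nonneg.2 hab)]
      gcongr
      exact le_abs_self C
  have hball : ∀ a ∈ Icc s t, x a ∈ closedBall (x s) (|C| * (t - s) ^ γ) := fun a ha =>
    (hholder s ⟨le_rfl, ha.1.trans ha.2⟩ a ha ha.1).trans <| by
      gcongr
      · exact sub_nonneg.2 ha.1
      · exact ha.2
  obtain ⟨K, hK⟩ := ((hf.fderiv_right (m := 2) le_rfl).fderiv_right (m := 1) le_rfl).contDiffOn
    |>.exists_lipschitzOnWith one_ne_zero (convex_closedBall _ _) (isCompact_closedBall _ _)
  exact exists_mesh_abs_sum_sub_lt (S := secondOrderRiemannSummand f x x2)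
    (g := fun u => f (x u)) (by positivity : 0 ≤ K * |C| ^ 3) (by linarith : 1 < 3 * γ)
    fun a ha b hb hab => abs_secondOrderRiemannSummand_sub_le (hf.of_le (by norm_num))
      (convex_closedBall _ _) hK hab (hball a ha) (hball b hb) (hholder a ha b hb hab)
      (hgeo a (hIcc ha) b (hIcc hb))

/-- Itô–Stratonovich change of variables at order 2: under the order-2 rough path
hypotheses on `x`, for `f ∈ C³(ℝ^d; ℝ)`, `f(x_t) − f(x_s)` is the limit of the
compensated Riemann sums
`∑_q [ ∑ᵢ ∂ᵢf(x_{t_q}) x¹_{t_q t_{q+1}}(i) + ∑_{i₁ i₂} ∂²_{i₁i₂} f(x_{t_q}) x²_{t_q t_{q+1}}(i₁,i₂) ]`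
over partitions of `[s,t]` whose mesh tends to `0`. -/
theorem stmt8 (d : ℕ) (T γ : ℝ) (hT : 0 < T) (hγ1 : 1 / 3 < γ) (hγ2 : γ ≤ 1 / 2)
    (x : ℝ → EuclideanSpace ℝ (Fin d)) (x2 : ℝ → ℝ → Fin d → Fin d → ℝ)
    (hx : ∃ Cx : ℝ, ∀ s ∈ Icc (0 : ℝ) T, ∀ t ∈ Icc (0 : ℝ) T,
      ‖x t - x s‖ ≤ Cx * |t - s| ^ γ)
    (hx2 : ∃ C2 : ℝ, ∀ s ∈ Icc (0 : ℝ) T, ∀ t ∈ Icc (0 : ℝ) T, ∀ i j,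
      |x2 s t i j| ≤ C2 * |t - s| ^ (2 * γ))
    (hmult : ∀ s ∈ Icc (0 : ℝ) T, ∀ u ∈ Icc (0 : ℝ) T, ∀ t ∈ Icc (0 : ℝ) T, ∀ i j,
      x2 s t i j - x2 s u i j - x2 u t i j = (x u i - x s i) * (x t j - x u j))
    (hgeo : ∀ s ∈ Icc (0 : ℝ) T, ∀ t ∈ Icc (0 : ℝ) T, ∀ i j,
      (x t i - x s i) * (x t j - x s j) = x2 s t i j + x2 s t j i)
    (f : EuclideanSpace ℝ (Fin d) → ℝ) (hf : ContDiff ℝ 3 f)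
    (s t : ℝ) (hs : s ∈ Icc (0 : ℝ) T) (ht : t ∈ Icc (0 : ℝ) T) (hst : s ≤ t) :
    ∀ ε > (0 : ℝ), ∃ η > (0 : ℝ), ∀ (n : ℕ) (π : Fin (n + 1) → ℝ),
      Monotone π → π 0 = s → π (Fin.last n) = t →
      (∀ q : Fin n, π q.succ - π q.castSucc < η) →
      |(∑ q : Fin n,
          ((∑ i, fderiv ℝ f (x (π q.castSucc)) (EuclideanSpace.single i 1) *
              (x (π q.succ) i - x (π q.castSucc) i)) +
           ∑ i, ∑ j,
            fderiv ℝ (fun z => fderiv ℝ f z (EuclideanSpace.single i 1))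
                (x (π q.castSucc)) (EuclideanSpace.single j 1) *
              x2 (π q.castSucc) (π q.succ) i j))
        - (f (x t) - f (x s))| < ε :=
  stmt8_general d T γ hγ1 x x2 hx hgeo f hf s t hs ht
end

section
/- Let x be a weakly geometric rough path of roughness γ with N = ⌊1/γ⌋ and let f ∈ C_b^N(ℝ^d). Then for all (s,t), the Taylor-shuffle identity holds: Σ_{k=1}^{N−1} (1/k!) Σ_{i₁,…,i_k} ∂^k_{i₁⋯i_k} f(x_s) Π_{j=1}^k x¹_{st}(i_j) = Σ_{k=1}^{N−1} Σ_{i₁,…,i_k} ∂^k_{i_k⋯i₁} f(x_s) x^k_{st}(i₁,…,i_k); consequently δ(f(x))_{st} = Σ_{k=1}^{N−1} ∂^k_{i_k⋯i₁}f(x_s) x^k_{st}(i₁,…,i_k) + r⁰_{st} with r⁰ ∈ C₂^{Nγ}. -/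
/-! Schwarz's theorem makes `D^k f(x_s)` a symmetric multilinear map, so summing it against the
shuffle identity `∏ⱼ x¹_{st}(iⱼ) = ∑_σ x^k_{st}(i ∘ σ)` produces `k!` equal copies of
`∑ᵢ D^k f(x_s)(eᵢ) x^k_{st}(i)`, which cancels the `1/k!` of Taylor's formula. The remainder is
then the Taylor remainder of `f` at `x_s` in the direction `x_t - x_s`, of size
`sup ‖D^N f‖ ‖x_t - x_s‖^N ≲ |t - s|^{Nγ}`. -/

open Function Nat Set

section Symmetry

variable {𝕜 E E' F : Type*} [NontriviallyNormedField 𝕜] [NormedAddCommGroup E] [NormedSpace 𝕜 E]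
  [NormedAddCommGroup E'] [NormedSpace 𝕜 E'] [NormedAddCommGroup F] [NormedSpace 𝕜 F]

theorem fderiv_apply_comp_perm {ι : Type*} [Fintype ι] [DecidableEq ι]
    {g : E → ContinuousMultilinearMap 𝕜 (fun _ : ι => E') F} {σ : Equiv.Perm ι}
    (hg : ∀ y w, g y (w ∘ σ) = g y w) (x u : E) (w : ι → E') :
    fderiv 𝕜 g x u (w ∘ σ) = fderiv 𝕜 g x u w := by
  set L := (ContinuousMultilinearMap.domDomCongrₗᵢ 𝕜 E' F σ).toContinuousLinearEquiv
  have hLg : L ∘ g = g := funext fun y => ContinuousMultilinearMap.ext (hg y)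
  have h := L.comp_fderiv (f := g) (x := x)
  rw [hLg] at h
  conv_rhs => rw [h]
  rfl

theorem iteratedFDeriv_apply_comp_swap_succ (f : E → F) {n : ℕ} {a b : Fin n}
    (hab : ∀ y w, iteratedFDeriv 𝕜 n f y (w ∘ Equiv.swap a b) = iteratedFDeriv 𝕜 n f y w)
    (x : E) (m : Fin (n + 1) → E) :
    iteratedFDeriv 𝕜 (n + 1) f x (m ∘ Equiv.swap a.succ b.succ) =
      iteratedFDeriv 𝕜 (n + 1) f x m := by
  have h0 : (m ∘ Equiv.swap a.succ b.succ) 0 = m 0 := by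
    simp [Equiv.swap_apply_of_ne_of_ne (Fin.succ_ne_zero a).symm (Fin.succ_ne_zero b).symm]
  have htail : Fin.tail (m ∘ Equiv.swap a.succ b.succ) = Fin.tail m ∘ Equiv.swap a b := by
    simp only [Fin.tail_def, comp_def, (Fin.succ_injective n).swap_apply]
  rw [iteratedFDeriv_succ_apply_left, iteratedFDeriv_succ_apply_left, h0, htail]
  exact fderiv_apply_comp_perm hab x (m 0) (Fin.tail m)

theorem iteratedFDeriv_add_two_apply (f : E → F) (x : E) {n : ℕ} (m : Fin (n + 2) → E) :
    iteratedFDeriv 𝕜 (n + 2) f x m =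
      fderiv 𝕜 (fderiv 𝕜 (iteratedFDeriv 𝕜 n f)) x (m 0) (m 1) (Fin.tail (Fin.tail m)) := by
  let L := (continuousMultilinearCurryLeftEquiv 𝕜 (fun _ : Fin (n + 1) => E) F).symm
  have h : fderiv 𝕜 (iteratedFDeriv 𝕜 (n + 1) f) x =
      (L.toContinuousLinearEquiv : _ →L[𝕜] _).comp
        (fderiv 𝕜 (fderiv 𝕜 (iteratedFDeriv 𝕜 n f)) x) := by
    conv_lhs => rw [iteratedFDeriv_succ_eq_comp_left]
    exact ContinuousLinearEquiv.comp_fderiv (𝕜 := 𝕜)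
      (F := ContinuousMultilinearMap 𝕜 (fun _ : Fin (n + 1) => E) F) L.toContinuousLinearEquiv
      (f := fderiv 𝕜 (iteratedFDeriv 𝕜 n f)) (x := x)
  rw [iteratedFDeriv_succ_apply_left, h]
  rfl

end Symmetry

section SecondSymmetry

variable {𝕜 E F : Type*} [RCLike 𝕜] [NormedAddCommGroup E] [NormedSpace 𝕜 E]
  [NormedAddCommGroup F] [NormedSpace 𝕜 F]

theorem ContDiff.iteratedFDeriv_apply_comp_swap_zero_one {f : E → F} {n : ℕ}
    (hf : ContDiff 𝕜 (n + 2) f) (x : E) (m : Fin (n + 2) → E) :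
    iteratedFDeriv 𝕜 (n + 2) f x (m ∘ Equiv.swap 0 1) = iteratedFDeriv 𝕜 (n + 2) f x m := by
  have hsymm : IsSymmSndFDerivAt 𝕜 (iteratedFDeriv 𝕜 n f) x :=
    (hf.iteratedFDeriv_right (m := 2) (by rw [add_comm])).contDiffAt.isSymmSndFDerivAt (by simp)
  rw [iteratedFDeriv_add_two_apply, iteratedFDeriv_add_two_apply (m := m), ← hsymm.eq]
  rfl

theorem ContDiff.iteratedFDeriv_apply_comp_perm {n : ℕ} {f : E → F} (hf : ContDiff 𝕜 n f)
    (x : E) (σ : Equiv.Perm (Fin n)) (m : Fin n → E) :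
    iteratedFDeriv 𝕜 n f x (m ∘ σ) = iteratedFDeriv 𝕜 n f x m := by
  induction n generalizing f x with
  | zero => rw [Subsingleton.elim σ 1]; rfl
  | succ n ih =>
    rcases n with _ | n
    · obtain rfl : σ = 1 := Subsingleton.elim (α := Equiv.Perm (Fin 1)) _ _
      rfl
    -- adjacent transpositions generate: `swap 0 1` is Schwarz, the others only permute the tail
    have hσ : σ ∈ Submonoid.closure
        (range fun i : Fin (n + 1) ↦ Equiv.swap i.castSucc i.succ) := by
      rw [Equiv.Perm.mclosure_swap_castSucc_succ]; trivial
    induction hσ using Submonoid.closure_induction generalizing m with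
    | mem τ hτ =>
      obtain ⟨i, rfl⟩ := hτ
      cases i using Fin.cases with
      | zero => exact hf.iteratedFDeriv_apply_comp_swap_zero_one x m
      | succ j =>
        exact iteratedFDeriv_apply_comp_swap_succ (a := j.castSucc) (b := j.succ) f
          (fun y w => ih (hf.of_le (by norm_cast; omega)) y _ w) x m
    | one => rfl
    | mul τ ρ _ _ hτ hρ => rw [Equiv.Perm.coe_mul, ← comp_assoc, hρ, hτ]

end SecondSymmetry

section Taylor

variable {E F : Type*} [NormedAddCommGroup E] [NormedSpace ℝ E]
  [NormedAddCommGroup F] [NormedSpace ℝ F] [CompleteSpace F]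

theorem norm_sub_sum_iteratedFDeriv_le {f : E → F} {n : ℕ} (hf : ContDiff ℝ (n + 1) f) {M : ℝ}
    (hM : ∀ y, ‖iteratedFDeriv ℝ (n + 1) f y‖ ≤ M) (x v : E) :
    ‖f (x + v) - ∑ k ∈ Finset.range (n + 1), (k ! : ℝ)⁻¹ • iteratedFDeriv ℝ k f x (fun _ => v)‖
      ≤ M * ‖v‖ ^ (n + 1) := by
  rw [map_add_eq_sum_add_integral_iteratedFDeriv (fun t _ => hf.contDiffAt), add_sub_cancel_left,
    norm_smul]
  have hintegrand : ∀ t ∈ uIoc (0 : ℝ) 1,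
      ‖(1 - t) ^ n • iteratedFDeriv ℝ (n + 1) f (x + t • v) (fun _ => v)‖ ≤ M * ‖v‖ ^ (n + 1) := by
    intro t ht
    rw [uIoc_of_le zero_le_one] at ht
    have h1t : ‖(1 - t) ^ n‖ ≤ 1 := by
      rw [norm_pow, Real.norm_of_nonneg (by linarith [ht.2])]
      exact pow_le_one₀ (by linarith [ht.2]) (by linarith [ht.1])
    calc ‖(1 - t) ^ n • iteratedFDeriv ℝ (n + 1) f (x + t • v) (fun _ => v)‖
        ≤ 1 * (‖iteratedFDeriv ℝ (n + 1) f (x + t • v)‖ * ∏ _ : Fin (n + 1), ‖v‖) := by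
          rw [norm_smul]
          gcongr
          exact ContinuousMultilinearMap.le_opNorm _ _
      _ ≤ M * ‖v‖ ^ (n + 1) := by
          rw [one_mul, Finset.prod_const, Finset.card_univ, Fintype.card_fin]
          gcongr
          exact hM _
  have hint := intervalIntegral.norm_integral_le_of_norm_le_const hintegrand
  have hfact : ‖((n ! : ℝ))⁻¹‖ ≤ 1 := by
    rw [norm_inv, Real.norm_natCast]
    exact inv_le_one_of_one_le₀ (by exact_mod_cast n.factorial_pos)
  calc _ ≤ 1 * (M * ‖v‖ ^ (n + 1) * |1 - 0|) := by gcongr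
    _ = M * ‖v‖ ^ (n + 1) := by norm_num

end Taylor

theorem MultilinearMap.apply_eq_sum_basis {R ι κ M N : Type*} [CommSemiring R] [AddCommMonoid M]
    [Module R M] [AddCommMonoid N] [Module R N] [Fintype ι] [DecidableEq ι] [Fintype κ]
    (b : Module.Basis κ R M) (D : MultilinearMap R (fun _ : ι => M) N) (v : ι → M) :
    D v = ∑ i : ι → κ, (∏ j, b.repr (v j) (i j)) • D (fun j => b (i j)) := by
  conv_lhs => rw [← funext fun j => b.sum_repr (v j)]
  rw [D.map_sum]
  simp_rw [D.map_smul_univ]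

theorem iteratedFDeriv_const_eq_sum_single {ι : Type*} [Fintype ι] [DecidableEq ι] {k : ℕ}
    (f : EuclideanSpace ℝ ι → ℝ) (y v : EuclideanSpace ℝ ι) :
    iteratedFDeriv ℝ k f y (fun _ => v) =
      ∑ i : Fin k → ι,
        iteratedFDeriv ℝ k f y (fun j => EuclideanSpace.single (i j) 1) * ∏ j, v (i j) := by
  refine ((iteratedFDeriv ℝ k f y).toMultilinearMap.apply_eq_sum_basis
    (EuclideanSpace.basisFun ι ℝ).toBasis _).trans ?_
  simp [mul_comm]

theorem sum_mul_sum_perm_comp {R α β : Type*} [CommSemiring R] [Fintype α] [DecidableEq α]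
    [Fintype β] (c X : (α → β) → R) (hc : ∀ (σ : Equiv.Perm α) i, c (i ∘ σ) = c i) :
    ∑ i, c i * ∑ σ : Equiv.Perm α, X (i ∘ σ) = (Fintype.card α)! * ∑ i, c i * X i := by
  have hσ : ∀ σ : Equiv.Perm α, ∑ i, c i * X (i ∘ σ) = ∑ i, c i * X i := fun σ =>
    calc ∑ i, c i * X (i ∘ σ) = ∑ i, c (i ∘ σ) * X (i ∘ σ) := by simp only [hc]
      _ = ∑ i, c i * X i :=
        Equiv.sum_comp (σ.symm.arrowCongr (Equiv.refl β)) (fun i => c i * X i)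
  simp_rw [Finset.mul_sum]
  rw [Finset.sum_comm]
  simp_rw [hσ, Finset.sum_const, Finset.card_univ, Fintype.card_perm, nsmul_eq_mul, Finset.mul_sum]

theorem inv_factorial_mul_sum_iteratedFDeriv_mul_prod {ι : Type*} [Fintype ι] [DecidableEq ι]
    {k : ℕ} {f : EuclideanSpace ℝ ι → ℝ} (hf : ContDiff ℝ k f) (y : EuclideanSpace ℝ ι)
    (w : ι → ℝ) (Xk : (Fin k → ι) → ℝ)
    (hX : ∀ i, ∏ j, w (i j) = ∑ σ : Equiv.Perm (Fin k), Xk (i ∘ σ)) :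
    (k ! : ℝ)⁻¹ * ∑ i : Fin k → ι,
        iteratedFDeriv ℝ k f y (fun j => EuclideanSpace.single (i j) 1) * ∏ j, w (i j) =
      ∑ i : Fin k → ι,
        iteratedFDeriv ℝ k f y (fun j => EuclideanSpace.single (i (Fin.rev j)) 1) * Xk i := by
  have hsymm : ∀ (σ : Equiv.Perm (Fin k)) (i : Fin k → ι),
      iteratedFDeriv ℝ k f y (fun j => EuclideanSpace.single ((i ∘ σ) j) 1) =
        iteratedFDeriv ℝ k f y (fun j => EuclideanSpace.single (i j) 1) :=
    fun σ i => hf.iteratedFDeriv_apply_comp_perm y σ (fun j => EuclideanSpace.single (i j) 1)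
  simp_rw [hX]
  rw [sum_mul_sum_perm_comp _ _ hsymm, Fintype.card_fin,
    inv_mul_cancel_left₀ (by exact_mod_cast k.factorial_ne_zero)]
  exact Finset.sum_congr rfl fun i _ => by rw [← hsymm Fin.revPerm i]; rfl

theorem abs_sub_sub_sum_iteratedFDeriv_single_le {ι : Type*} [Fintype ι] [DecidableEq ι] {n : ℕ}
    {f : EuclideanSpace ℝ ι → ℝ} (hf : ContDiff ℝ (n + 1) f) {M : ℝ}
    (hM : ∀ y, ‖iteratedFDeriv ℝ (n + 1) f y‖ ≤ M) (y z : EuclideanSpace ℝ ι) :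
    |f z - f y - ∑ k ∈ Finset.Icc 1 n, (k ! : ℝ)⁻¹ * ∑ i : Fin k → ι,
        iteratedFDeriv ℝ k f y (fun j => EuclideanSpace.single (i j) 1) * ∏ j, (z - y) (i j)|
      ≤ M * ‖z - y‖ ^ (n + 1) := by
  have hrange : Finset.range (n + 1) = insert 0 (Finset.Icc 1 n) := by
    ext k; simp only [Finset.mem_range, Finset.mem_insert, Finset.mem_Icc]; omega
  have htaylor := norm_sub_sum_iteratedFDeriv_le hf hM y (z - y)
  rw [add_sub_cancel, hrange, Finset.sum_insert (by simp)] at htaylor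
  simp only [factorial_zero, cast_one, inv_one, iteratedFDeriv_zero_apply, one_mul, smul_eq_mul,
    ← iteratedFDeriv_const_eq_sum_single] at htaylor ⊢
  rwa [sub_sub, ← Real.norm_eq_abs]

theorem EuclideanSpace.norm_le_sqrt_card_mul_of_forall_abs_le {ι : Type*} [Fintype ι]
    {v : EuclideanSpace ℝ ι} {r : ℝ} (h : ∀ a, |v a| ≤ r) : ‖v‖ ≤ √(Fintype.card ι) * r := by
  rcases isEmpty_or_nonempty ι with _ | ⟨⟨a⟩⟩
  · simp [Subsingleton.elim v 0]
  have hr : 0 ≤ r := (abs_nonneg _).trans (h a)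
  rw [EuclideanSpace.norm_eq, ← Real.sqrt_sq hr, ← Real.sqrt_mul (Nat.cast_nonneg _)]
  refine Real.sqrt_le_sqrt ?_
  calc ∑ a, ‖v a‖ ^ 2 ≤ ∑ _a : ι, r ^ 2 :=
        Finset.sum_le_sum fun a _ => pow_le_pow_left₀ (norm_nonneg _) (h a) 2
    _ = Fintype.card ι * r ^ 2 := by simp

theorem stmt10_general (d N : ℕ) (hN : 1 ≤ N) (T γ : ℝ)
    (x : ℝ → EuclideanSpace ℝ (Fin d))
    (X : (n : ℕ) → ℝ → ℝ → (Fin n → Fin d) → ℝ)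
    -- first level: x¹_{st} = x_t − x_s
    (hX1 : ∀ (s t : ℝ) (i : Fin 1 → Fin d), X 1 s t i = x t (i 0) - x s (i 0))
    -- regularity: x^n ∈ C₂^{nγ}
    (hXreg : ∀ n, 1 ≤ n → n ≤ N → ∃ C : ℝ, ∀ s ∈ Icc (0 : ℝ) T,
      ∀ t ∈ Icc (0 : ℝ) T, ∀ i : Fin n → Fin d,
        |X n s t i| ≤ C * |t - s| ^ ((n : ℝ) * γ))
    -- geometric shuffle property, in the form ∏_j x¹_{st}(i_j) = ∑_{σ} x^k_{st}(i∘σ)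
    (hShuffle : ∀ (k : ℕ) (s t : ℝ) (i : Fin k → Fin d),
      s ∈ Icc (0 : ℝ) T → t ∈ Icc (0 : ℝ) T →
      (∏ j, (x t (i j) - x s (i j))) = ∑ σ : Equiv.Perm (Fin k), X k s t (i ∘ σ))
    (f : EuclideanSpace ℝ (Fin d) → ℝ) (hf : ContDiff ℝ N f)
    (hfb : ∃ M : ℝ, ∀ k ≤ N, ∀ y, ‖iteratedFDeriv ℝ k f y‖ ≤ M) :
    -- the Taylor-shuffle identity
    (∀ s ∈ Icc (0 : ℝ) T, ∀ t ∈ Icc (0 : ℝ) T,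
      (∑ k ∈ Finset.Icc 1 (N - 1), ((Nat.factorial k : ℝ))⁻¹ *
        ∑ i : Fin k → Fin d,
          iteratedFDeriv ℝ k f (x s) (fun j => EuclideanSpace.single (i j) 1) *
            ∏ j, (x t (i j) - x s (i j)))
      = ∑ k ∈ Finset.Icc 1 (N - 1),
          ∑ i : Fin k → Fin d,
            iteratedFDeriv ℝ k f (x s)
                (fun j => EuclideanSpace.single (i (Fin.rev j)) 1) *
              X k s t i) ∧
    -- the remainder r⁰ is in C₂^{Nγ}
    (∃ C : ℝ, ∀ s ∈ Icc (0 : ℝ) T, ∀ t ∈ Icc (0 : ℝ) T,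
      |f (x t) - f (x s) -
        ∑ k ∈ Finset.Icc 1 (N - 1),
          ∑ i : Fin k → Fin d,
            iteratedFDeriv ℝ k f (x s)
                (fun j => EuclideanSpace.single (i (Fin.rev j)) 1) *
              X k s t i|
        ≤ C * |t - s| ^ ((N : ℝ) * γ)) := by
  have hidentity := fun s (hs : s ∈ Icc (0 : ℝ) T) t (ht : t ∈ Icc (0 : ℝ) T) =>
    Finset.sum_congr rfl fun k (hk : k ∈ Finset.Icc 1 (N - 1)) =>
      inv_factorial_mul_sum_iteratedFDeriv_mul_prod
      (hf.of_le (by simp only [Finset.mem_Icc] at hk; exact_mod_cast (by omega : k ≤ N))) (x s)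
      (fun a => x t a - x s a) (X k s t) fun i => hShuffle k s t i hs ht
  refine ⟨hidentity, ?_⟩
  obtain ⟨n, rfl⟩ := Nat.exists_eq_add_of_le' hN
  obtain ⟨M, hM⟩ := hfb
  obtain ⟨C, hC⟩ := hXreg 1 le_rfl hN
  have hM0 : 0 ≤ M := (norm_nonneg _).trans (hM 0 (by omega) (x 0))
  refine ⟨M * (√d * C) ^ (n + 1), fun s hs t ht => ?_⟩
  have hincrement : ‖x t - x s‖ ≤ √d * C * |t - s| ^ γ := by
    rw [mul_assoc]
    simpa using EuclideanSpace.norm_le_sqrt_card_mul_of_forall_abs_le (v := x t - x s)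
      fun a => by simpa [hX1] using hC s hs t ht (fun _ => a)
  rw [← hidentity s hs t ht, Nat.add_sub_cancel]
  calc _ ≤ M * ‖x t - x s‖ ^ (n + 1) :=
      abs_sub_sub_sum_iteratedFDeriv_single_le hf (hM _ le_rfl) (x s) (x t)
    _ ≤ M * (√d * C * |t - s| ^ γ) ^ (n + 1) := by gcongr
    _ = M * (√d * C) ^ (n + 1) * |t - s| ^ (((n + 1 : ℕ) : ℝ) * γ) := by
      rw [mul_pow, mul_comm _ γ, Real.rpow_mul (abs_nonneg _), Real.rpow_natCast, mul_assoc]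

/-- Taylor-shuffle identity for a weakly geometric rough path of order `N = ⌊1/γ⌋`
and `f ∈ C_b^N(ℝ^d)`:
`∑_{k=1}^{N−1} (1/k!) ∑_{i₁…i_k} ∂^k f(x_s) ∏ x¹_{st}(i_j)
  = ∑_{k=1}^{N−1} ∑_{i₁…i_k} ∂^k_{i_k⋯i₁} f(x_s) x^k_{st}(i₁,…,i_k)`,
and consequently `δ(f(x))_{st} = ∑_k ∂^k f(x_s) x^k_{st} + r⁰_{st}` with
`r⁰ ∈ C₂^{Nγ}`. -/
theorem stmt10 (d N : ℕ) (hN : 1 ≤ N) (T γ : ℝ) (hT : 0 < T)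
    (hγ1 : 1 / (N + 1 : ℝ) < γ) (hγ2 : γ ≤ 1 / (N : ℝ))
    (x : ℝ → EuclideanSpace ℝ (Fin d))
    (X : (n : ℕ) → ℝ → ℝ → (Fin n → Fin d) → ℝ)
    -- first level: x¹_{st} = x_t − x_s
    (hX1 : ∀ (s t : ℝ) (i : Fin 1 → Fin d), X 1 s t i = x t (i 0) - x s (i 0))
    -- regularity: x^n ∈ C₂^{nγ}
    (hXreg : ∀ n, 1 ≤ n → n ≤ N → ∃ C : ℝ, ∀ s ∈ Icc (0 : ℝ) T,
      ∀ t ∈ Icc (0 : ℝ) T, ∀ i : Fin n → Fin d,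
        |X n s t i| ≤ C * |t - s| ^ ((n : ℝ) * γ))
    -- geometric shuffle property, in the form ∏_j x¹_{st}(i_j) = ∑_{σ} x^k_{st}(i∘σ)
    (hShuffle : ∀ (k : ℕ) (s t : ℝ) (i : Fin k → Fin d),
      s ∈ Icc (0 : ℝ) T → t ∈ Icc (0 : ℝ) T →
      (∏ j, (x t (i j) - x s (i j))) = ∑ σ : Equiv.Perm (Fin k), X k s t (i ∘ σ))
    (f : EuclideanSpace ℝ (Fin d) → ℝ) (hf : ContDiff ℝ N f)
    (hfb : ∃ M : ℝ, ∀ k ≤ N, ∀ y, ‖iteratedFDeriv ℝ k f y‖ ≤ M) :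
    -- the Taylor-shuffle identity
    (∀ s ∈ Icc (0 : ℝ) T, ∀ t ∈ Icc (0 : ℝ) T,
      (∑ k ∈ Finset.Icc 1 (N - 1), ((Nat.factorial k : ℝ))⁻¹ *
        ∑ i : Fin k → Fin d,
          iteratedFDeriv ℝ k f (x s) (fun j => EuclideanSpace.single (i j) 1) *
            ∏ j, (x t (i j) - x s (i j)))
      = ∑ k ∈ Finset.Icc 1 (N - 1),
          ∑ i : Fin k → Fin d,
            iteratedFDeriv ℝ k f (x s)
                (fun j => EuclideanSpace.single (i (Fin.rev j)) 1) *
              X k s t i) ∧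
    -- the remainder r⁰ is in C₂^{Nγ}
    (∃ C : ℝ, ∀ s ∈ Icc (0 : ℝ) T, ∀ t ∈ Icc (0 : ℝ) T,
      |f (x t) - f (x s) -
        ∑ k ∈ Finset.Icc 1 (N - 1),
          ∑ i : Fin k → Fin d,
            iteratedFDeriv ℝ k f (x s)
                (fun j => EuclideanSpace.single (i (Fin.rev j)) 1) *
              X k s t i|
        ≤ C * |t - s| ^ ((N : ℝ) * γ)) :=
  stmt10_general d N hN T γ x X hX1 hXreg hShuffle f hf hfb
end
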